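/- arXiv:2505.04063 — 7 statements merged into one kernel-verified Lean document; each statement's English description precedes it below -/
import Mathlib

section
/- Let ι be a finite index type, let x, z : ι → ℝ, and let Ω = {i : x i ≠ 0} be the support of x. Define a = −∑ᵢ sgn(x i) · z i + ∑_{i ∉ Ω} |z i|. Then for every real t ≥ 0, ∑ᵢ |x i − t · z i| ≥ ∑ᵢ |x i| + a · t. -/
open Classical in
/-- Let `Ω = {i : x i ≠ 0}` be the support of `x` and set
`a = −∑ i, sgn (x i) * z i + ∑_{i ∉ Ω} |z i|`.  Then for every `t ≥ 0`,
`‖x − t • z‖₁ ≥ ‖x‖₁ + a * t`. -/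
theorem l1_perturb_lower_bound {ι : Type*} [Fintype ι] (x z : ι → ℝ)
    (Ω : Set ι) (hΩ : Ω = {i | x i ≠ 0}) (a : ℝ)
    (ha : a = -∑ i, Real.sign (x i) * z i +
      ∑ i ∈ Finset.univ.filter (fun i => i ∉ Ω), |z i|) :
    ∀ t : ℝ, 0 ≤ t → ∑ i, |x i - t * z i| ≥ ∑ i, |x i| + a * t := by
  intro t ht
  have key : ∀ i, |x i| - Real.sign (x i) * z i * t +
      (if i ∉ Ω then |z i| * t else 0) ≤ |x i - t * z i| := by
    intro i
    by_cases h : x i = 0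
    · have hiΩ : i ∉ Ω := by simp [hΩ, h]
      simp [h, Real.sign_zero, hiΩ, abs_mul, abs_of_nonneg ht, mul_comm]
    · have hiΩ : i ∈ Ω := by simp [hΩ, h]
      simp only [hiΩ, not_true, if_neg, if_false]
      have hs : Real.sign (x i) * x i = |x i| := by
        rcases lt_or_gt_of_ne h with hlt | hgt
        · rw [Real.sign_of_neg hlt, abs_of_neg hlt]; ring
        · rw [Real.sign_of_pos hgt, abs_of_pos hgt]; ring
      have h1 : Real.sign (x i) * (x i - t * z i) ≤ |x i - t * z i| := by
        calc Real.sign (x i) * (x i - t * z i)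
            ≤ |Real.sign (x i) * (x i - t * z i)| := le_abs_self _
          _ = |Real.sign (x i)| * |x i - t * z i| := abs_mul _ _
          _ ≤ 1 * |x i - t * z i| := by
              apply mul_le_mul_of_nonneg_right _ (abs_nonneg _)
              rcases lt_or_gt_of_ne h with hlt | hgt
              · rw [Real.sign_of_neg hlt]; norm_num
              · rw [Real.sign_of_pos hgt]; norm_num
          _ = |x i - t * z i| := one_mul _
      nlinarith [h1, hs]
  have hsum := Finset.sum_le_sum (s := Finset.univ) (fun i _ => key i)
  rw [Finset.sum_add_distrib, Finset.sum_sub_distrib] at hsum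
  rw [Finset.sum_ite, Finset.sum_const, smul_zero, add_zero, ← Finset.sum_mul] at hsum
  rw [ha]
  have heq : (∑ i, |x i|) + (-∑ i, Real.sign (x i) * z i +
      ∑ i ∈ Finset.univ.filter (fun i => i ∉ Ω), |z i|) * t =
      (∑ i, |x i|) - (∑ i, Real.sign (x i) * z i) * t +
      ∑ i ∈ Finset.univ.filter (fun i => i ∉ Ω), |z i| * t := by
    simp only [add_mul, neg_mul, Finset.sum_mul]; ring
  rw [heq]
  exact hsum
end

section
/- Let V and W be real inner product spaces, let δ > 0, M ≥ 0, and let n be a natural number. Suppose H₁, H₂ ∈ V satisfy ‖H₁‖ ≥ δ and ‖H₂‖ ≥ δ, and suppose L₁, L₂ ∈ W and real numbers a₁, a₂ satisfy 0 ≤ a₁ ≤ M and |a₂ − a₁| ≤ √n · ‖L₂ − L₁‖. Define Y₁ = −(a₁/‖H₁‖³) · H₁ and Y₂ = −(a₂/‖H₂‖³) · H₂. Then ‖Y₂ − Y₁‖ ≤ (√n/δ²) · ‖L₂ − L₁‖ + (2M/δ³) · ‖H₂ − H₁‖. -/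
private lemma poly_key (δ a b t : ℝ) (hδ : 0 < δ) (ha : δ ≤ a) (hb : δ ≤ b)
    (ht : t ≤ a * b) :
    δ^6 * (a^2*b^6 + a^6*b^2 - 2*a^3*b^3*t) ≤ 4*a^6*b^6*(a^2+b^2-2*t) := by
  have ha' : 0 < a := lt_of_lt_of_le hδ ha
  have hb' : 0 < b := lt_of_lt_of_le hδ hb
  have hb2 : δ^2 ≤ b^2 := pow_le_pow_left₀ (le_of_lt hδ) hb 2
  have ha2 : δ^2 ≤ a^2 := pow_le_pow_left₀ (le_of_lt hδ) ha 2
  have h1 : δ^3 ≤ a * b^2 := by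
    have := mul_le_mul ha hb2 (by positivity : (0:ℝ) ≤ δ^2) (le_of_lt ha')
    nlinarith [this]
  have h2 : δ^3 ≤ a^2 * b := by
    have := mul_le_mul hb ha2 (by positivity : (0:ℝ) ≤ δ^2) (le_of_lt hb')
    nlinarith [this]
  have hsum : δ^3 * (a + b) ≤ 2 * (a^2 * b^2) := by
    nlinarith [mul_le_mul_of_nonneg_right h1 (le_of_lt ha'),
      mul_le_mul_of_nonneg_right h2 (le_of_lt hb')]
  have h4 : δ^6 * (a+b)^2 ≤ 4*a^4*b^4 := by
    have hu : (0:ℝ) ≤ δ^3 * (a + b) := by positivity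
    have := mul_self_le_mul_self hu hsum
    nlinarith [this]
  have h5 : δ^6 ≤ 4*a^3*b^3 := by
    have := mul_le_mul h1 h2 (by positivity : (0:ℝ) ≤ δ^3) (by positivity)
    nlinarith [this]
  have t1 : 0 ≤ 2*a^3*b^3*(4*a^3*b^3-δ^6)*(a*b-t) := by
    apply mul_nonneg (mul_nonneg (by positivity) (by linarith)) (by linarith)
  have t2 : 0 ≤ a^2*b^2*(4*a^4*b^4-δ^6*(a+b)^2)*(a-b)^2 := by
    apply mul_nonneg (mul_nonneg (by positivity) (by linarith)) (sq_nonneg _)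
  nlinarith [t1, t2]

private lemma inv_cube_lipschitz {V : Type*} [NormedAddCommGroup V]
    [InnerProductSpace ℝ V] (δ : ℝ) (hδ : 0 < δ) (x y : V)
    (hx : δ ≤ ‖x‖) (hy : δ ≤ ‖y‖) :
    ‖(1/‖x‖^3) • x - (1/‖y‖^3) • y‖ ≤ 2/δ^3 * ‖x - y‖ := by
  set a := ‖x‖ with hadef
  set b := ‖y‖ with hbdef
  have ha : 0 < a := lt_of_lt_of_le hδ hx
  have hb : 0 < b := lt_of_lt_of_le hδ hy
  set t := inner (𝕜 := ℝ) x y with htdef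
  have ht : t ≤ a * b := real_inner_le_norm x y
  -- rewrite the difference as a scalar multiple
  have hrw : (1/a^3) • x - (1/b^3) • y = (1/(a^3*b^3)) • (b^3 • x - a^3 • y) := by
    rw [smul_sub, smul_smul, smul_smul]
    congr 1 <;> · congr 1; field_simp
  have hn1 : ‖b^3 • x - a^3 • y‖^2 = b^6*a^2 + a^6*b^2 - 2*a^3*b^3*t := by
    rw [norm_sub_sq_real, norm_smul, norm_smul, real_inner_smul_left,
      real_inner_smul_right]
    simp only [Real.norm_eq_abs, abs_of_pos (pow_pos ha 3), abs_of_pos (pow_pos hb 3)]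
    rw [← hadef, ← hbdef, ← htdef]
    ring
  have hn2 : ‖x - y‖^2 = a^2 + b^2 - 2*t := by
    rw [norm_sub_sq_real]; rw [← hadef, ← hbdef, ← htdef]; ring
  have hpoly := poly_key δ a b t hδ hx hy ht
  have hsq : ‖b^3 • x - a^3 • y‖^2 ≤ (2*a^3*b^3/δ^3 * ‖x - y‖)^2 := by
    rw [hn1, mul_pow, hn2, div_pow]
    rw [← sub_nonneg]
    have hδ6 : (0:ℝ) < δ^6 := by positivity
    have : (2*a^3*b^3)^2/(δ^3)^2 * (a^2+b^2-2*t) - (b^6*a^2 + a^6*b^2 - 2*a^3*b^3*t)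
        = (4*a^6*b^6*(a^2+b^2-2*t) - δ^6*(a^2*b^6 + a^6*b^2 - 2*a^3*b^3*t)) / δ^6 := by
      field_simp; ring
    rw [this]
    exact div_nonneg (by linarith) (le_of_lt hδ6)
  have hrhsnn : 0 ≤ 2*a^3*b^3/δ^3 * ‖x - y‖ := by positivity
  have hle : ‖b^3 • x - a^3 • y‖ ≤ 2*a^3*b^3/δ^3 * ‖x - y‖ := by
    have := Real.sqrt_le_sqrt hsq
    rwa [Real.sqrt_sq (norm_nonneg _), Real.sqrt_sq hrhsnn] at this
  rw [hrw, norm_smul, Real.norm_eq_abs, abs_of_pos (by positivity : (0:ℝ) < 1/(a^3*b^3))]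
  calc 1/(a^3*b^3) * ‖b^3 • x - a^3 • y‖
      ≤ 1/(a^3*b^3) * (2*a^3*b^3/δ^3 * ‖x - y‖) := by
        apply mul_le_mul_of_nonneg_left hle (by positivity)
    _ = 2/δ^3 * ‖x - y‖ := by field_simp

/-- Key estimate on the dual variable in the ADMM scheme for the TNF model:
with `Y₁ = −(a₁/‖H₁‖³) • H₁` and `Y₂ = −(a₂/‖H₂‖³) • H₂`, if `‖H₁‖, ‖H₂‖ ≥ δ`,
`0 ≤ a₁ ≤ M` and `|a₂ − a₁| ≤ √n ‖L₂ − L₁‖`, then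
`‖Y₂ − Y₁‖ ≤ (√n/δ²) ‖L₂ − L₁‖ + (2M/δ³) ‖H₂ − H₁‖`. -/
theorem dual_variable_estimate {V W : Type*}
    [NormedAddCommGroup V] [InnerProductSpace ℝ V]
    [NormedAddCommGroup W] [InnerProductSpace ℝ W]
    (δ M : ℝ) (hδ : 0 < δ) (hM : 0 ≤ M) (n : ℕ)
    (H₁ H₂ : V) (hH₁ : δ ≤ ‖H₁‖) (hH₂ : δ ≤ ‖H₂‖)
    (L₁ L₂ : W) (a₁ a₂ : ℝ) (ha₁ : 0 ≤ a₁) (ha₁M : a₁ ≤ M)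
    (ha : |a₂ - a₁| ≤ Real.sqrt n * ‖L₂ - L₁‖) :
    ‖(-(a₂ / ‖H₂‖ ^ 3) • H₂) - (-(a₁ / ‖H₁‖ ^ 3) • H₁)‖ ≤
      Real.sqrt n / δ ^ 2 * ‖L₂ - L₁‖ + 2 * M / δ ^ 3 * ‖H₂ - H₁‖ := by
  have hb : 0 < ‖H₂‖ := lt_of_lt_of_le hδ hH₂
  have ha' : 0 < ‖H₁‖ := lt_of_lt_of_le hδ hH₁
  have hsplit : (-(a₂ / ‖H₂‖ ^ 3) • H₂) - (-(a₁ / ‖H₁‖ ^ 3) • H₁)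
      = (-((a₂ - a₁) / ‖H₂‖ ^ 3)) • H₂
        - a₁ • ((1/‖H₂‖^3) • H₂ - (1/‖H₁‖^3) • H₁) := by
    rw [smul_sub, smul_smul, smul_smul]
    have e1 : a₁ * (1/‖H₂‖^3) = a₁ / ‖H₂‖^3 := by ring
    have e2 : a₁ * (1/‖H₁‖^3) = a₁ / ‖H₁‖^3 := by ring
    rw [e1, e2]
    have : (-((a₂ - a₁) / ‖H₂‖ ^ 3)) = (-(a₂ / ‖H₂‖ ^ 3)) + a₁/‖H₂‖^3 := by ring
    rw [this, add_smul]
    module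
  rw [hsplit]
  have h1 : ‖(-((a₂ - a₁) / ‖H₂‖ ^ 3)) • H₂‖ ≤ Real.sqrt n / δ ^ 2 * ‖L₂ - L₁‖ := by
    have hnorm : ‖(-((a₂ - a₁) / ‖H₂‖ ^ 3)) • H₂‖ = |a₂ - a₁| / ‖H₂‖ ^ 2 := by
      rw [norm_smul, Real.norm_eq_abs, abs_neg, abs_div, abs_of_pos (pow_pos hb 3)]
      field_simp
    rw [hnorm]
    have hδ2 : δ ^ 2 ≤ ‖H₂‖ ^ 2 := pow_le_pow_left₀ (le_of_lt hδ) hH₂ 2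
    have hrhsnn : 0 ≤ Real.sqrt n * ‖L₂ - L₁‖ := (abs_nonneg _).trans ha
    calc |a₂ - a₁| / ‖H₂‖ ^ 2 ≤ (Real.sqrt n * ‖L₂ - L₁‖) / δ ^ 2 :=
          div_le_div₀ hrhsnn ha (by positivity) hδ2
      _ = Real.sqrt n / δ ^ 2 * ‖L₂ - L₁‖ := by ring
  have h2 : ‖a₁ • ((1/‖H₂‖^3) • H₂ - (1/‖H₁‖^3) • H₁)‖ ≤ 2 * M / δ ^ 3 * ‖H₂ - H₁‖ := by
    rw [norm_smul, Real.norm_eq_abs, abs_of_nonneg ha₁]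
    have hlip := inv_cube_lipschitz δ hδ H₂ H₁ hH₂ hH₁
    calc a₁ * ‖(1/‖H₂‖^3) • H₂ - (1/‖H₁‖^3) • H₁‖
        ≤ M * (2/δ^3 * ‖H₂ - H₁‖) := by
          apply mul_le_mul ha₁M hlip (norm_nonneg _) hM
      _ = 2 * M / δ ^ 3 * ‖H₂ - H₁‖ := by ring
  calc ‖(-((a₂ - a₁) / ‖H₂‖ ^ 3)) • H₂ - a₁ • ((1/‖H₂‖^3) • H₂ - (1/‖H₁‖^3) • H₁)‖
      ≤ ‖(-((a₂ - a₁) / ‖H₂‖ ^ 3)) • H₂‖ + ‖a₁ • ((1/‖H₂‖^3) • H₂ - (1/‖H₁‖^3) • H₁)‖ :=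
        norm_sub_le _ _
    _ ≤ _ := add_le_add h1 h2
end

section
/- Let ι be a finite index type with N elements. For x : ι → ℝ write ‖x‖₂ = √(∑ᵢ (x i)²) and ‖x‖₁ = ∑ᵢ |x i|. Let λ > 0, δ > 0, m ≥ 0, and let E₁, E₂, D₁, D₂ : ι → ℝ satisfy ‖D₁‖₂ ≥ δ, ‖D₂‖₂ ≥ δ, and ‖E₁‖₁ ≤ m. Define U₁ = −λ(‖E₁‖₁/‖D₁‖₂³) · D₁ and U₂ = −λ(‖E₂‖₁/‖D₂‖₂³) · D₂. Then ‖U₂ − U₁‖₂ ≤ (λ√N/δ²) · ‖E₂ − E₁‖₂ + (2λm/δ³) · ‖D₂ − D₁‖₂. -/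
/-!
Write `U = -λ ‖E‖₁ • g D` with `g x = ‖x‖⁻³ • x`. Then
`U₂ - U₁ = -λ (‖E₂‖₁ - ‖E₁‖₁) • g D₂ - λ ‖E₁‖₁ • (g D₂ - g D₁)`, where `‖g D₂‖ = ‖D₂‖⁻² ≤ δ⁻²`,
`|‖E₂‖₁ - ‖E₁‖₁| ≤ ‖E₂ - E₁‖₁ ≤ √N ‖E₂ - E₁‖₂` by Cauchy–Schwarz, and `g` is `2/δ³`-Lipschitz
outside the open `δ`-ball: `g x = ‖x‖⁻¹ • (‖x‖⁻² • x)`, and the inversion `x ↦ ‖x‖⁻² • x`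
scales distances by exactly `1 / (‖x‖ ‖y‖)`.
-/

open Finset

section InnerProductSpace

variable {F : Type*} [NormedAddCommGroup F] [InnerProductSpace ℝ F]

theorem norm_inv_pow_three_smul_sub_le {x y : F} {δ : ℝ} (hδ : 0 < δ) (hx : δ ≤ ‖x‖)
    (hy : δ ≤ ‖y‖) :
    ‖(‖x‖ ^ 3)⁻¹ • x - (‖y‖ ^ 3)⁻¹ • y‖ ≤ 2 / δ ^ 3 * ‖x - y‖ := by
  set a := ‖x‖
  set b := ‖y‖
  have ha : 0 < a := hδ.trans_le hx
  have hb : 0 < b := hδ.trans_le hy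
  have hsplit : (a ^ 3)⁻¹ • x - (b ^ 3)⁻¹ • y =
      a⁻¹ • ((1 / a) ^ 2 • x - (1 / b) ^ 2 • y) + (a⁻¹ - b⁻¹) • ((1 / b) ^ 2 • y) := by
    module
  have hinv : ‖(1 / a) ^ 2 • x - (1 / b) ^ 2 • y‖ = ‖x - y‖ / (a * b) := by
    rw [← dist_eq_norm, dist_div_norm_sq_smul (norm_pos_iff.mp ha) (norm_pos_iff.mp hb),
      dist_eq_norm]
    ring
  have hrad : |a⁻¹ - b⁻¹| ≤ ‖x - y‖ / (a * b) := by
    rw [inv_sub_inv ha.ne' hb.ne', abs_div, abs_of_pos (mul_pos ha hb), abs_sub_comm]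
    gcongr
    exact abs_norm_sub_norm_le x y
  have hδab : δ ^ 3 ≤ a ^ 2 * b := by
    calc δ ^ 3 = δ ^ 2 * δ := by ring
      _ ≤ a ^ 2 * b := by gcongr
  have hδba : δ ^ 3 ≤ a * b ^ 2 := by
    calc δ ^ 3 = δ * δ ^ 2 := by ring
      _ ≤ a * b ^ 2 := by gcongr
  calc ‖(a ^ 3)⁻¹ • x - (b ^ 3)⁻¹ • y‖
      ≤ a⁻¹ * ‖(1 / a) ^ 2 • x - (1 / b) ^ 2 • y‖ + |a⁻¹ - b⁻¹| * ((1 / b) ^ 2 * b) := by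
        rw [hsplit]
        refine (norm_add_le _ _).trans_eq ?_
        rw [norm_smul, norm_smul, norm_smul, norm_inv, Real.norm_of_nonneg ha.le,
          Real.norm_of_nonneg (by positivity : 0 ≤ (1 / b) ^ 2), Real.norm_eq_abs]
    _ ≤ a⁻¹ * (‖x - y‖ / (a * b)) + ‖x - y‖ / (a * b) * ((1 / b) ^ 2 * b) := by
        rw [hinv]; gcongr
    _ = ‖x - y‖ / (a ^ 2 * b) + ‖x - y‖ / (a * b ^ 2) := by
        field_simp
    _ ≤ ‖x - y‖ / δ ^ 3 + ‖x - y‖ / δ ^ 3 := by gcongr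
    _ = 2 / δ ^ 3 * ‖x - y‖ := by ring

theorem norm_div_pow_three_smul_sub_le {x₁ x₂ : F} {c₁ c₂ δ : ℝ} (hδ : 0 < δ)
    (h₁ : δ ≤ ‖x₁‖) (h₂ : δ ≤ ‖x₂‖) :
    ‖(c₂ / ‖x₂‖ ^ 3) • x₂ - (c₁ / ‖x₁‖ ^ 3) • x₁‖ ≤
      |c₂ - c₁| / δ ^ 2 + |c₁| * (2 / δ ^ 3 * ‖x₂ - x₁‖) := by
  have hx₂ : 0 < ‖x₂‖ := hδ.trans_le h₂
  have hg₂ : ‖(‖x₂‖ ^ 3)⁻¹ • x₂‖ ≤ 1 / δ ^ 2 := by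
    calc ‖(‖x₂‖ ^ 3)⁻¹ • x₂‖ = 1 / ‖x₂‖ ^ 2 := by
          rw [norm_smul, norm_inv, norm_pow, norm_norm]
          field_simp
      _ ≤ 1 / δ ^ 2 := by gcongr
  have hsplit : (c₂ / ‖x₂‖ ^ 3) • x₂ - (c₁ / ‖x₁‖ ^ 3) • x₁ =
      (c₂ - c₁) • ((‖x₂‖ ^ 3)⁻¹ • x₂) +
        c₁ • ((‖x₂‖ ^ 3)⁻¹ • x₂ - (‖x₁‖ ^ 3)⁻¹ • x₁) := by
    module
  calc ‖(c₂ / ‖x₂‖ ^ 3) • x₂ - (c₁ / ‖x₁‖ ^ 3) • x₁‖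
      ≤ |c₂ - c₁| * ‖(‖x₂‖ ^ 3)⁻¹ • x₂‖ + |c₁| * ‖(‖x₂‖ ^ 3)⁻¹ • x₂ - (‖x₁‖ ^ 3)⁻¹ • x₁‖ := by
        rw [hsplit, ← Real.norm_eq_abs, ← Real.norm_eq_abs, ← norm_smul, ← norm_smul]
        exact norm_add_le _ _
    _ ≤ |c₂ - c₁| * (1 / δ ^ 2) + |c₁| * (2 / δ ^ 3 * ‖x₂ - x₁‖) := by
        gcongr
        exact norm_inv_pow_three_smul_sub_le hδ h₂ h₁
    _ = |c₂ - c₁| / δ ^ 2 + |c₁| * (2 / δ ^ 3 * ‖x₂ - x₁‖) := by ring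

end InnerProductSpace

section Fintype

variable {ι : Type*} [Fintype ι]

theorem abs_sum_abs_sub_sum_abs_le (x y : ι → ℝ) :
    |(∑ i, |x i|) - (∑ i, |y i|)| ≤ ∑ i, |x i - y i| := by
  rw [← sum_sub_distrib]
  exact (abs_sum_le_sum_abs _ _).trans
    (sum_le_sum fun i _ => abs_abs_sub_abs_le_abs_sub (x i) (y i))

theorem sum_abs_le_sqrt_card_mul_sqrt_sum_sq (x : ι → ℝ) :
    ∑ i, |x i| ≤ √(Fintype.card ι) * √(∑ i, x i ^ 2) := by
  rw [← Real.sqrt_mul (Nat.cast_nonneg _)]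
  refine Real.le_sqrt_of_sq_le ?_
  simpa only [sq_abs, card_univ] using sq_sum_le_card_mul_sum_sq (s := univ) (f := fun i => |x i|)

theorem sqrt_sum_sq_eq_norm_toLp (x : ι → ℝ) :
    √(∑ i, x i ^ 2) = ‖(WithLp.toLp 2 x : EuclideanSpace ℝ ι)‖ := by
  simp [EuclideanSpace.norm_eq]

theorem sqrt_sum_sq_sub_eq_norm_toLp_sub (x y : ι → ℝ) :
    √(∑ i, (x i - y i) ^ 2) =
      ‖(WithLp.toLp 2 x : EuclideanSpace ℝ ι) - WithLp.toLp 2 y‖ :=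
  sqrt_sum_sq_eq_norm_toLp (x - y)

end Fintype

theorem dual_variable_estimate_tnf_plus_general {ι : Type*} [Fintype ι] (N : ℕ)
    (hN : Fintype.card ι = N)
    (lam δ m : ℝ) (hlam : 0 < lam) (hδ : 0 < δ)
    (E₁ E₂ D₁ D₂ : ι → ℝ)
    (hD₁ : δ ≤ Real.sqrt (∑ i, D₁ i ^ 2))
    (hD₂ : δ ≤ Real.sqrt (∑ i, D₂ i ^ 2))
    (hE₁ : ∑ i, |E₁ i| ≤ m)
    (U₁ U₂ : ι → ℝ)
    (hU₁ : U₁ = fun i =>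
      -(lam * (∑ j, |E₁ j|) / (Real.sqrt (∑ j, D₁ j ^ 2)) ^ 3) * D₁ i)
    (hU₂ : U₂ = fun i =>
      -(lam * (∑ j, |E₂ j|) / (Real.sqrt (∑ j, D₂ j ^ 2)) ^ 3) * D₂ i) :
    Real.sqrt (∑ i, (U₂ i - U₁ i) ^ 2) ≤
      lam * Real.sqrt N / δ ^ 2 * Real.sqrt (∑ i, (E₂ i - E₁ i) ^ 2) +
        2 * lam * m / δ ^ 3 * Real.sqrt (∑ i, (D₂ i - D₁ i) ^ 2) := by
  subst hN hU₁ hU₂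
  rw [sqrt_sum_sq_eq_norm_toLp D₁] at hD₁ ⊢
  rw [sqrt_sum_sq_eq_norm_toLp D₂] at hD₂ ⊢
  set e₁ := ∑ j, |E₁ j|
  set e₂ := ∑ j, |E₂ j|
  have hE : |e₂ - e₁| ≤ √(Fintype.card ι) * √(∑ i, (E₂ i - E₁ i) ^ 2) :=
    (abs_sum_abs_sub_sum_abs_le E₂ E₁).trans
      (sum_abs_le_sqrt_card_mul_sqrt_sum_sq fun i => E₂ i - E₁ i)
  have hc : |-(lam * e₂) - -(lam * e₁)| = lam * |e₂ - e₁| := by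
    rw [neg_sub_neg, ← mul_sub, abs_mul, abs_of_pos hlam, abs_sub_comm]
  have hc₁ : |-(lam * e₁)| = lam * e₁ := by
    rw [abs_neg, abs_of_nonneg (mul_nonneg hlam.le (sum_nonneg fun i _ => abs_nonneg _))]
  set v₁ : EuclideanSpace ℝ ι := WithLp.toLp 2 D₁
  set v₂ : EuclideanSpace ℝ ι := WithLp.toLp 2 D₂
  simp only [← neg_div]
  calc _ = ‖(-(lam * e₂) / ‖v₂‖ ^ 3) • v₂ - (-(lam * e₁) / ‖v₁‖ ^ 3) • v₁‖ := by
        rw [sqrt_sum_sq_sub_eq_norm_toLp_sub]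
        rfl
    _ ≤ |-(lam * e₂) - -(lam * e₁)| / δ ^ 2 + |-(lam * e₁)| * (2 / δ ^ 3 * ‖v₂ - v₁‖) :=
        norm_div_pow_three_smul_sub_le hδ hD₁ hD₂
    _ ≤ lam * (√(Fintype.card ι) * √(∑ i, (E₂ i - E₁ i) ^ 2)) / δ ^ 2 +
          lam * m * (2 / δ ^ 3 * √(∑ i, (D₂ i - D₁ i) ^ 2)) := by
        rw [hc, hc₁, sqrt_sum_sq_sub_eq_norm_toLp_sub D₂]
        gcongr
    _ = _ := by ring

/-- Key estimate in Lemma 4 for the TNF+ model: with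
`U₁ = −λ(‖E₁‖₁/‖D₁‖₂³) • D₁` and `U₂ = −λ(‖E₂‖₁/‖D₂‖₂³) • D₂`, if
`‖D₁‖₂, ‖D₂‖₂ ≥ δ` and `‖E₁‖₁ ≤ m`, then
`‖U₂ − U₁‖₂ ≤ (λ√N/δ²) ‖E₂ − E₁‖₂ + (2λm/δ³) ‖D₂ − D₁‖₂`. -/
theorem dual_variable_estimate_tnf_plus {ι : Type*} [Fintype ι] (N : ℕ)
    (hN : Fintype.card ι = N)
    (lam δ m : ℝ) (hlam : 0 < lam) (hδ : 0 < δ) (hm : 0 ≤ m)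
    (E₁ E₂ D₁ D₂ : ι → ℝ)
    (hD₁ : δ ≤ Real.sqrt (∑ i, D₁ i ^ 2))
    (hD₂ : δ ≤ Real.sqrt (∑ i, D₂ i ^ 2))
    (hE₁ : ∑ i, |E₁ i| ≤ m)
    (U₁ U₂ : ι → ℝ)
    (hU₁ : U₁ = fun i =>
      -(lam * (∑ j, |E₁ j|) / (Real.sqrt (∑ j, D₁ j ^ 2)) ^ 3) * D₁ i)
    (hU₂ : U₂ = fun i =>
      -(lam * (∑ j, |E₂ j|) / (Real.sqrt (∑ j, D₂ j ^ 2)) ^ 3) * D₂ i) :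
    Real.sqrt (∑ i, (U₂ i - U₁ i) ^ 2) ≤
      lam * Real.sqrt N / δ ^ 2 * Real.sqrt (∑ i, (E₂ i - E₁ i) ^ 2) +
        2 * lam * m / δ ^ 3 * Real.sqrt (∑ i, (D₂ i - D₁ i) ^ 2) :=
  dual_variable_estimate_tnf_plus_general N hN lam δ m hlam hδ E₁ E₂ D₁ D₂ hD₁ hD₂ hE₁ U₁ U₂ hU₁ hU₂
end

section
/- Let E > 0. Set C = (((27E + 2) + √((27E + 2)² − 4))/2)^{1/3} and ι = 1/3 + (C + 1/C)/3. Then ι > 1, ι³ − ι² = E, and ι is the unique positive real number t satisfying t³ − t² = E. -/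
set_option maxHeartbeats 1000000


/-- Correctness of the Cardano coefficient `ι` in the H- and D-subproblem updates:
with `C = (((27E+2) + √((27E+2)² − 4))/2)^(1/3)` and `ι = 1/3 + (C + 1/C)/3`, one has
`ι > 1`, `ι³ − ι² = E`, and `ι` is the unique positive root of `t³ − t² = E`. -/
theorem cardano_coefficient_correct (E : ℝ) (hE : 0 < E) :
    let C : ℝ := (((27 * E + 2) + Real.sqrt ((27 * E + 2) ^ 2 - 4)) / 2) ^ ((1 : ℝ) / 3)
    let ι : ℝ := 1 / 3 + (C + 1 / C) / 3
    1 < ι ∧ ι ^ 3 - ι ^ 2 = E ∧ ∀ t : ℝ, 0 < t → t ^ 3 - t ^ 2 = E → t = ι := by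
  intro C ι
  have hCdef : C = (((27 * E + 2) + Real.sqrt ((27 * E + 2) ^ 2 - 4)) / 2) ^ ((1 : ℝ) / 3) := rfl
  have hidef : ι = 1 / 3 + (C + 1 / C) / 3 := rfl
  clear_value ι
  clear_value C
  set a : ℝ := 27 * E + 2 with ha
  have ha2 : 2 < a := by simp [ha]; nlinarith
  have hs0 : 0 ≤ a ^ 2 - 4 := by nlinarith
  have hs : Real.sqrt (a ^ 2 - 4) ^ 2 = a ^ 2 - 4 := Real.sq_sqrt hs0
  have hsn : 0 ≤ Real.sqrt (a ^ 2 - 4) := Real.sqrt_nonneg _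
  have hb1 : 1 < (a + Real.sqrt (a ^ 2 - 4)) / 2 := by nlinarith
  have hb0 : (0:ℝ) ≤ (a + Real.sqrt (a ^ 2 - 4)) / 2 := by linarith
  have hC1 : 1 < C := by
    rw [hCdef]
    exact (Real.one_lt_rpow_iff_of_pos (by linarith)).mpr (Or.inl ⟨hb1, by norm_num⟩)
  have hC0 : 0 < C := by linarith
  have hCne : C ≠ 0 := ne_of_gt hC0
  have hC3 : C ^ 3 = (a + Real.sqrt (a ^ 2 - 4)) / 2 := by
    rw [hCdef]
    have : ((((27 * E + 2) + Real.sqrt ((27 * E + 2) ^ 2 - 4)) / 2) ^ ((1:ℝ)/3)) ^ (3:ℕ)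
        = (((27 * E + 2) + Real.sqrt ((27 * E + 2) ^ 2 - 4)) / 2) ^ (((1:ℝ)/3) * (3:ℕ)) := by
      rw [← Real.rpow_natCast _ 3, ← Real.rpow_mul hb0]
    simpa using this
  have h6 : C ^ 6 + 1 = a * C ^ 3 := by
    have hmul : (a + Real.sqrt (a ^ 2 - 4)) * (a - Real.sqrt (a ^ 2 - 4)) = 4 := by nlinarith
    nlinarith [hC3, sq_nonneg (C^3)]
  have hι1 : 1 < ι := by
    have hx : 2 < C + 1 / C := by
      have hq : 0 < (C - 1) ^ 2 / C := div_pos (pow_pos (by linarith) 2) hC0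
      have heq : C + 1 / C - 2 = (C - 1) ^ 2 / C := by field_simp; ring
      linarith
    rw [hidef]; linarith
  have hroot : ι ^ 3 - ι ^ 2 = E := by
    rw [hidef]
    field_simp
    nlinarith [h6, hC0, sq_nonneg C, sq_nonneg (C^2), sq_nonneg (C^3)]
  refine ⟨hι1, hroot, ?_⟩
  intro t ht hteq
  have ht1 : 1 < t := by
    by_contra hle
    push_neg at hle
    nlinarith [sq_nonneg t, mul_pos ht ht]
  have hfac : (t - ι) * (t ^ 2 + t * ι + ι ^ 2 - t - ι) = 0 := by
    linear_combination hteq - hroot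
  have hpos : 0 < t ^ 2 + t * ι + ι ^ 2 - t - ι := by nlinarith
  have := mul_eq_zero.mp hfac
  rcases this with h | h
  · linarith
  · linarith
end

section
/- Let V be a real inner product space, let K ∈ V with K ≠ 0, and let ρ > 0 and μ > 0. Set E = ρ/(μ‖K‖³), C = (((27E + 2) + √((27E + 2)² − 4))/2)^{1/3}, and ι = 1/3 + (C + 1/C)/3. Then for every H ∈ V with H ≠ 0, ρ/‖ιK‖ + (μ/2)‖ιK − K‖² ≤ ρ/‖H‖ + (μ/2)‖H − K‖²; that is, ιK is a global minimizer of H ↦ ρ/‖H‖ + (μ/2)‖H − K‖² over V ∖ {0}. -/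
lemma iota_prop (E : ℝ) (hE : 0 < E) :
    let C : ℝ := (((27 * E + 2) + Real.sqrt ((27 * E + 2) ^ 2 - 4)) / 2) ^ ((1 : ℝ) / 3)
    let ι : ℝ := 1 / 3 + (C + 1 / C) / 3
    ι ^ 3 - ι ^ 2 = E ∧ 1 < ι := by
  intro C ι
  have hιdef : ι = 1 / 3 + (C + 1 / C) / 3 := rfl
  clear_value ι
  have hs2 : 2 < 27 * E + 2 := by linarith
  have hnn : (0:ℝ) ≤ (27 * E + 2) ^ 2 - 4 := by nlinarith
  have hD0 : 0 ≤ Real.sqrt ((27 * E + 2) ^ 2 - 4) := Real.sqrt_nonneg _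
  have hD2 : (Real.sqrt ((27 * E + 2) ^ 2 - 4)) ^ 2 = (27 * E + 2) ^ 2 - 4 :=
    Real.sq_sqrt hnn
  set D : ℝ := Real.sqrt ((27 * E + 2) ^ 2 - 4) with hD
  have hx1 : (1:ℝ) < ((27 * E + 2) + D) / 2 := by linarith
  have hx0 : (0:ℝ) ≤ ((27 * E + 2) + D) / 2 := by linarith
  have hC3 : C ^ 3 = ((27 * E + 2) + D) / 2 := by
    show ((((27 * E + 2) + D) / 2) ^ ((1:ℝ)/3)) ^ 3 = ((27 * E + 2) + D) / 2
    rw [← Real.rpow_natCast ((((27 * E + 2) + D) / 2) ^ ((1:ℝ)/3)) 3,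
      ← Real.rpow_mul hx0]
    norm_num
  have hC1 : 1 < C :=
    (Real.one_lt_rpow_iff_of_pos (by linarith)).mpr (Or.inl ⟨hx1, by norm_num⟩)
  clear_value C
  clear_value D
  have hC0 : C ≠ 0 := by linarith
  have hCinv : (1 / C) ^ 3 = ((27 * E + 2) - D) / 2 := by
    have h4 : ((27 * E + 2) + D) * ((27 * E + 2) - D) = 4 := by nlinarith
    have hmul : C ^ 3 * (((27 * E + 2) - D) / 2) = 1 := by rw [hC3]; nlinarith
    field_simp
    nlinarith [hmul]
  have huc : (C + 1 / C) ^ 3 = (27 * E + 2) + 3 * (C + 1 / C) := by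
    have expand : (C + 1 / C) ^ 3 = C ^ 3 + (1 / C) ^ 3 + 3 * (C + 1 / C) := by
      field_simp; ring
    rw [expand, hC3, hCinv]; ring
  have hu2 : 2 < C + 1 / C := by
    have hp : 0 < (C - 1) ^ 2 / C :=
      div_pos (pow_pos (by linarith) 2) (by linarith)
    have h2 : (C + 1 / C) - 2 = (C - 1) ^ 2 / C := by field_simp; ring
    linarith
  constructor
  · rw [hιdef]; linear_combination huc / 27
  · rw [hιdef]; linarith

lemma oned_min (ρ μ k a ι : ℝ) (hμ : 0 < μ) (hk : 0 < k) (ha : 0 < a)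
    (hι : 1 < ι) (heq : ρ = μ * k ^ 3 * (ι ^ 3 - ι ^ 2)) :
    ρ / (ι * k) + μ / 2 * (ι * k - k) ^ 2 ≤ ρ / a + μ / 2 * (a - k) ^ 2 := by
  have hιk : 0 < ι * k := by positivity
  have key : ρ / a + μ / 2 * (a - k) ^ 2 - (ρ / (ι * k) + μ / 2 * (ι * k - k) ^ 2)
      = μ / (2 * a) * (a - ι * k) ^ 2 * (a + 2 * ι * k - 2 * k) := by
    rw [heq]; field_simp; ring
  have h1 : 0 ≤ a + 2 * ι * k - 2 * k := by nlinarith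
  have h2 : 0 ≤ μ / (2 * a) * (a - ι * k) ^ 2 := by positivity
  nlinarith [mul_nonneg h2 h1]

/-- Closed-form solution of the H-subproblem of ADMM for the TNF model:
with `E = ρ/(μ‖K‖³)`, `C = (((27E+2) + √((27E+2)² − 4))/2)^(1/3)` and
`ι = 1/3 + (C + 1/C)/3`, the point `ι • K` is a global minimizer of
`H ↦ ρ/‖H‖ + (μ/2)‖H − K‖²` over `V \ {0}`. -/
theorem h_subproblem_closed_form {V : Type*} [NormedAddCommGroup V] [InnerProductSpace ℝ V]
    (K : V) (hK : K ≠ 0) (ρ μ : ℝ) (hρ : 0 < ρ) (hμ : 0 < μ) :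
    let E : ℝ := ρ / (μ * ‖K‖ ^ 3)
    let C : ℝ := (((27 * E + 2) + Real.sqrt ((27 * E + 2) ^ 2 - 4)) / 2) ^ ((1 : ℝ) / 3)
    let ι : ℝ := 1 / 3 + (C + 1 / C) / 3
    ∀ H : V, H ≠ 0 →
      ρ / ‖ι • K‖ + μ / 2 * ‖ι • K - K‖ ^ 2 ≤ ρ / ‖H‖ + μ / 2 * ‖H - K‖ ^ 2 := by
  intro E C ι H hH
  have hk : 0 < ‖K‖ := norm_pos_iff.mpr hK
  have hE : 0 < E := by
    show 0 < ρ / (μ * ‖K‖ ^ 3); positivity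
  obtain ⟨hι3, hι1⟩ : ι ^ 3 - ι ^ 2 = E ∧ 1 < ι := iota_prop E hE
  have hιpos : 0 < ι := by linarith
  have heq : ρ = μ * ‖K‖ ^ 3 * (ι ^ 3 - ι ^ 2) := by
    rw [hι3]
    show ρ = μ * ‖K‖ ^ 3 * (ρ / (μ * ‖K‖ ^ 3))
    field_simp
  have ha : 0 < ‖H‖ := norm_pos_iff.mpr hH
  have hn1 : ‖ι • K‖ = ι * ‖K‖ := by
    rw [norm_smul, Real.norm_eq_abs, abs_of_pos hιpos]
  have hn2 : ‖ι • K - K‖ = ι * ‖K‖ - ‖K‖ := by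
    have h : ι • K - K = (ι - 1) • K := by rw [sub_smul, one_smul]
    rw [h, norm_smul, Real.norm_eq_abs, abs_of_pos (by linarith : (0:ℝ) < ι - 1)]
    ring
  rw [hn1, hn2]
  calc ρ / (ι * ‖K‖) + μ / 2 * (ι * ‖K‖ - ‖K‖) ^ 2
      ≤ ρ / ‖H‖ + μ / 2 * (‖H‖ - ‖K‖) ^ 2 :=
        oned_min ρ μ ‖K‖ ‖H‖ ι hμ hk ha hι1 heq
    _ ≤ ρ / ‖H‖ + μ / 2 * ‖H - K‖ ^ 2 := by
        have h1 : |‖H‖ - ‖K‖| ≤ ‖H - K‖ := abs_norm_sub_norm_le H K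
        have h2 : (‖H‖ - ‖K‖) ^ 2 ≤ ‖H - K‖ ^ 2 := by
          rw [← sq_abs]; exact pow_le_pow_left₀ (abs_nonneg _) h1 2
        nlinarith
end

section
/- Let V be a real inner product space, K ∈ V with K ≠ 0, ρ > 0, μ > 0, and define f(H) = ρ/‖H‖ + (μ/2)‖H − K‖² for H ≠ 0. If H* ≠ 0 satisfies f(H*) ≤ f(H) for every H ≠ 0, then H* = t·K for some real t > 0. -/
/-!
Among vectors `H` of a fixed norm, `ρ / ‖H‖` is constant and
`‖H - K‖² = ‖H‖² - 2⟪H, K⟫ + ‖K‖²` is smallest when `⟪H, K⟫` reaches its Cauchy–Schwarz bound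
`‖H‖ ‖K‖`, i.e. at `(‖H‖ / ‖K‖) • K`. A minimizer does at least as well as this aligned point, so
it attains equality in Cauchy–Schwarz and lies on the ray of `K`.
-/

open RealInnerProductSpace

section

variable {V : Type*} [NormedAddCommGroup V] [InnerProductSpace ℝ V]

theorem norm_sub_sq_sub_norm_sub_sq_of_norm_eq {x y : V} (z : V) (h : ‖x‖ = ‖y‖) :
    ‖x - z‖ ^ 2 - ‖y - z‖ ^ 2 = 2 * (⟪y, z⟫ - ⟪x, z⟫) := by
  rw [norm_sub_sq_real, norm_sub_sq_real, h]
  ring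

theorem norm_div_norm_smul (x : V) {K : V} (hK : K ≠ 0) : ‖(‖x‖ / ‖K‖) • K‖ = ‖x‖ := by
  rw [norm_smul, Real.norm_of_nonneg (by positivity), div_mul_cancel₀ _ (norm_ne_zero_iff.2 hK)]

theorem inner_div_norm_smul_self (x : V) {K : V} (hK : K ≠ 0) :
    ⟪(‖x‖ / ‖K‖) • K, K⟫ = ‖x‖ * ‖K‖ := by
  rw [real_inner_smul_left, real_inner_self_eq_norm_mul_norm, ← mul_assoc,
    div_mul_cancel₀ _ (norm_ne_zero_iff.2 hK)]

theorem sameRay_of_norm_sub_sq_le_norm_div_norm_smul_sub_sq {x K : V} (hK : K ≠ 0)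
    (h : ‖x - K‖ ^ 2 ≤ ‖(‖x‖ / ‖K‖) • K - K‖ ^ 2) : SameRay ℝ x K := by
  have hdiff := norm_sub_sq_sub_norm_sub_sq_of_norm_eq K (norm_div_norm_smul x hK).symm
  rw [inner_div_norm_smul_self x hK] at hdiff
  have hinner : ⟪x, K⟫ = ‖x‖ * ‖K‖ := le_antisymm (real_inner_le_norm x K) (by linarith)
  rw [sameRay_iff_norm_smul_eq, ← inner_eq_norm_mul_iff_real.1 hinner]

end

theorem h_subproblem_minimizer_on_ray_general {V : Type*} [NormedAddCommGroup V]
    [InnerProductSpace ℝ V]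
    (K : V) (hK : K ≠ 0) (ρ μ : ℝ) (hμ : 0 < μ)
    (Hstar : V) (hHstar : Hstar ≠ 0)
    (hmin : ∀ H : V, H ≠ 0 →
      ρ / ‖Hstar‖ + μ / 2 * ‖Hstar - K‖ ^ 2 ≤ ρ / ‖H‖ + μ / 2 * ‖H - K‖ ^ 2) :
    ∃ t : ℝ, 0 < t ∧ Hstar = t • K := by
  have hscale : 0 < ‖Hstar‖ / ‖K‖ := div_pos (norm_pos_iff.2 hHstar) (norm_pos_iff.2 hK)
  have haligned := hmin _ (smul_ne_zero hscale.ne' hK)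
  rw [norm_div_norm_smul Hstar hK, add_le_add_iff_left,
    mul_le_mul_iff_right₀ (half_pos hμ)] at haligned
  exact (sameRay_of_norm_sub_sq_le_norm_div_norm_smul_sub_sq hK haligned).exists_pos_right
    hHstar hK

/-- Any global minimizer over `V \ {0}` of `H ↦ ρ/‖H‖ + (μ/2)‖H − K‖²` (with `K ≠ 0`,
`ρ > 0`, `μ > 0`) lies on the open ray spanned by `K`. -/
theorem h_subproblem_minimizer_on_ray {V : Type*} [NormedAddCommGroup V]
    [InnerProductSpace ℝ V]
    (K : V) (hK : K ≠ 0) (ρ μ : ℝ) (hρ : 0 < ρ) (hμ : 0 < μ)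
    (Hstar : V) (hHstar : Hstar ≠ 0)
    (hmin : ∀ H : V, H ≠ 0 →
      ρ / ‖Hstar‖ + μ / 2 * ‖Hstar - K‖ ^ 2 ≤ ρ / ‖H‖ + μ / 2 * ‖H - K‖ ^ 2) :
    ∃ t : ℝ, 0 < t ∧ Hstar = t • K :=
  h_subproblem_minimizer_on_ray_general K hK ρ μ hμ Hstar hHstar hmin
end

section
/- Let V be a real inner product space and δ > 0. For all x, y ∈ V with ‖x‖ ≥ δ and ‖y‖ ≥ δ, and every real ρ ≥ 0, one has ρ/‖y‖ ≤ ρ/‖x‖ − ρ · ⟨x/‖x‖³, y − x⟩ + (ρ/δ³) · ‖y − x‖². -/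
/-!
Write `a = ‖x‖` and `b = ‖y‖`. The exact second-order expansion of `t ↦ 1/t` at `a` gives
`1/b = 1/a - (b - a)/a² + (b - a)²/(a² b)`. Cauchy–Schwarz bounds the directional derivative
`⟪x/‖x‖³, y - x⟫` of `1/‖·‖` by the one-dimensional derivative `(b - a)/a²`, and the remainder is
at most `‖y - x‖²/δ³` because `|b - a| ≤ ‖y - x‖` and `a² b ≥ δ³`.
-/

open scoped RealInnerProductSpace

theorem inv_eq_inv_sub_add_sq_div {a b : ℝ} (ha : a ≠ 0) (hb : b ≠ 0) :
    b⁻¹ = a⁻¹ - (b - a) / a ^ 2 + (b - a) ^ 2 / (a ^ 2 * b) := by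
  field_simp
  ring

theorem sq_sub_norm_div_le {E : Type*} [SeminormedAddCommGroup E] {δ : ℝ} (hδ : 0 < δ)
    {x y : E} (hx : δ ≤ ‖x‖) (hy : δ ≤ ‖y‖) :
    (‖y‖ - ‖x‖) ^ 2 / (‖x‖ ^ 2 * ‖y‖) ≤ ‖y - x‖ ^ 2 / δ ^ 3 := by
  have h_num : (‖y‖ - ‖x‖) ^ 2 ≤ ‖y - x‖ ^ 2 := by
    rw [← sq_abs]
    gcongr
    exact abs_norm_sub_norm_le y x
  have h_den : δ ^ 3 ≤ ‖x‖ ^ 2 * ‖y‖ := by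
    calc δ ^ 3 = δ ^ 2 * δ := by ring
      _ ≤ ‖x‖ ^ 2 * ‖y‖ := by gcongr
  exact div_le_div₀ (sq_nonneg _) h_num (by positivity) h_den

section InnerProductSpace

variable {V : Type*} [NormedAddCommGroup V] [InnerProductSpace ℝ V]

theorem inner_inv_norm_cube_smul_sub_le (x y : V) :
    ⟪(‖x‖ ^ 3)⁻¹ • x, y - x⟫ ≤ (‖y‖ - ‖x‖) / ‖x‖ ^ 2 := by
  rw [real_inner_smul_left, inner_sub_right, real_inner_self_eq_norm_sq]
  rcases (norm_nonneg x).eq_or_lt with hx | hx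
  · simp [← hx]
  calc (‖x‖ ^ 3)⁻¹ * (⟪x, y⟫ - ‖x‖ ^ 2)
      ≤ (‖x‖ ^ 3)⁻¹ * (‖x‖ * ‖y‖ - ‖x‖ ^ 2) := by
        gcongr
        exact real_inner_le_norm x y
    _ = (‖y‖ - ‖x‖) / ‖x‖ ^ 2 := by field_simp

theorem inv_norm_le_of_le_norm {δ : ℝ} (hδ : 0 < δ) {x y : V} (hx : δ ≤ ‖x‖) (hy : δ ≤ ‖y‖) :
    ‖y‖⁻¹ ≤ ‖x‖⁻¹ - ⟪(‖x‖ ^ 3)⁻¹ • x, y - x⟫ + ‖y - x‖ ^ 2 / δ ^ 3 := by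
  rw [inv_eq_inv_sub_add_sq_div (hδ.trans_le hx).ne' (hδ.trans_le hy).ne']
  linarith [inner_inv_norm_cube_smul_sub_le x y, sq_sub_norm_div_le hδ hx hy]

end InnerProductSpace

/-- Descent-type inequality for `ρ/‖·‖` on `{x : ‖x‖ ≥ δ}`: for `ρ ≥ 0` and
`‖x‖, ‖y‖ ≥ δ > 0`,
`ρ/‖y‖ ≤ ρ/‖x‖ − ρ ⟨x/‖x‖³, y − x⟩ + (ρ/δ³) ‖y − x‖²`. -/
theorem descent_inequality_inv_norm {V : Type*} [NormedAddCommGroup V]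
    [InnerProductSpace ℝ V] (δ : ℝ) (hδ : 0 < δ)
    (x y : V) (hx : δ ≤ ‖x‖) (hy : δ ≤ ‖y‖) (ρ : ℝ) (hρ : 0 ≤ ρ) :
    ρ / ‖y‖ ≤ ρ / ‖x‖ - ρ * ⟪(‖x‖ ^ 3)⁻¹ • x, y - x⟫ + ρ / δ ^ 3 * ‖y - x‖ ^ 2 := by
  calc ρ / ‖y‖ = ρ * ‖y‖⁻¹ := div_eq_mul_inv ρ ‖y‖
    _ ≤ ρ * (‖x‖⁻¹ - ⟪(‖x‖ ^ 3)⁻¹ • x, y - x⟫ + ‖y - x‖ ^ 2 / δ ^ 3) :=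
        mul_le_mul_of_nonneg_left (inv_norm_le_of_le_norm hδ hx hy) hρ
    _ = ρ / ‖x‖ - ρ * ⟪(‖x‖ ^ 3)⁻¹ • x, y - x⟫ + ρ / δ ^ 3 * ‖y - x‖ ^ 2 := by ring
end
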